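/- For all integers n, m ∈ ℤ, the integral ∫_ℝ a_n(t) · conj(a_m(t)) dt equals π if n = m and equals 0 if n ≠ m. In particular each a_n lies in L²(ℝ, ℂ) and the family {a_n/√π}_{n ∈ ℤ} is orthonormal in L²(ℝ, ℂ). -/

import Mathlib

open MeasureTheory Complex Filter Topology

/-! With the Cayley transform `c(t) = (t - i)/(t + i)`, which maps the real line into the unit
circle, `a_n(t) = c(t)^n / (t + i)`, hence `a_n(t) · conj (a_m(t)) = c(t)^(n - m) / (1 + t²)`.
For `n = m` this integrates to `π`. Otherwise, since `c' = 2i c / (1 + t²)`, the integrand is the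
derivative of `c^k / (2ik)` with `k = n - m`, and this tends to the same limit `1 / (2ik)` at
both ends of the line, so the integral vanishes. -/

noncomputable def cayley (t : ℝ) : ℂ := (t - I) / (t + I)

theorem ofReal_add_I_ne_zero (t : ℝ) : (t : ℂ) + I ≠ 0 := by
  intro h; simpa using congrArg im h

theorem ofReal_sub_I_ne_zero (t : ℝ) : (t : ℂ) - I ≠ 0 := by
  intro h; simpa using congrArg im h

theorem ofReal_sub_I_mul_ofReal_add_I (t : ℝ) :
    ((t : ℂ) - I) * (t + I) = ((1 + t ^ 2 : ℝ) : ℂ) := by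
  push_cast; linear_combination (-1 : ℂ) * I_sq

theorem conj_ofReal_add_I (t : ℝ) : starRingEnd ℂ ((t : ℂ) + I) = t - I := by
  simp [sub_eq_add_neg]

theorem cayley_ne_zero (t : ℝ) : cayley t ≠ 0 :=
  div_ne_zero (ofReal_sub_I_ne_zero t) (ofReal_add_I_ne_zero t)

theorem conj_cayley (t : ℝ) : starRingEnd ℂ (cayley t) = (cayley t)⁻¹ := by
  have : starRingEnd ℂ ((t : ℂ) - I) = t + I := by simp
  rw [cayley, map_div₀, this, conj_ofReal_add_I, inv_div]

theorem norm_cayley (t : ℝ) : ‖cayley t‖ = 1 := by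
  rw [cayley, norm_div, ← conj_ofReal_add_I, Complex.norm_conj,
    div_self (norm_ne_zero_iff.mpr (ofReal_add_I_ne_zero t))]

theorem hasDerivAt_cayley (t : ℝ) :
    HasDerivAt cayley (2 * I * cayley t / ((1 + t ^ 2 : ℝ) : ℂ)) t := by
  have h := (((hasDerivAt_id (t : ℂ)).sub_const I).div ((hasDerivAt_id (t : ℂ)).add_const I)
    (ofReal_add_I_ne_zero t)).comp_ofReal
  refine h.congr_deriv ?_
  rw [id, cayley, ← ofReal_sub_I_mul_ofReal_add_I]
  field_simp [ofReal_add_I_ne_zero t, ofReal_sub_I_ne_zero t]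
  ring

theorem hasDerivAt_cayley_zpow (k : ℤ) (t : ℝ) :
    HasDerivAt (fun s => cayley s ^ k)
      (2 * I * k * (cayley t ^ k / ((1 + t ^ 2 : ℝ) : ℂ))) t := by
  refine ((hasDerivAt_zpow k (cayley t) (Or.inl (cayley_ne_zero t))).comp t
    (hasDerivAt_cayley t)).congr_deriv ?_
  rw [zpow_sub_one₀ (cayley_ne_zero t)]
  field_simp [cayley_ne_zero t]

theorem continuous_cayley : Continuous cayley :=
  continuous_iff_continuousAt.mpr fun t => (hasDerivAt_cayley t).continuousAt

theorem tendsto_cayley {l : Filter ℝ} (hl : Tendsto ((↑) : ℝ → ℂ) l (Bornology.cobounded ℂ)) :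
    Tendsto cayley l (𝓝 1) := by
  have h : Tendsto (fun t : ℝ => ((t : ℂ) + I)⁻¹) l (𝓝 0) :=
    tendsto_inv₀_cobounded.comp ((tendsto_add_const_cobounded I).comp hl)
  have key : ∀ t : ℝ, cayley t = 1 - 2 * I * ((t : ℂ) + I)⁻¹ := fun t => by
    rw [cayley]; field_simp [ofReal_add_I_ne_zero t]; ring
  simpa [funext key] using (h.const_mul (2 * I)).const_sub 1

theorem norm_cayley_zpow_div (k : ℤ) (t : ℝ) :
    ‖cayley t ^ k / ((1 + t ^ 2 : ℝ) : ℂ)‖ = (1 + t ^ 2)⁻¹ := by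
  rw [norm_div, norm_zpow, norm_cayley, one_zpow, norm_real, Real.norm_of_nonneg (by positivity),
    one_div]

theorem integrable_cayley_zpow_div (k : ℤ) :
    Integrable fun t : ℝ => cayley t ^ k / ((1 + t ^ 2 : ℝ) : ℂ) := by
  refine integrable_inv_one_add_sq.mono' (Continuous.aestronglyMeasurable ?_)
    (.of_forall fun t => (norm_cayley_zpow_div k t).le)
  exact (continuous_cayley.zpow₀ k fun t => .inl (cayley_ne_zero t)).div (by fun_prop)
    fun t => by exact_mod_cast (by positivity : (1 + t ^ 2 : ℝ) ≠ 0)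

theorem integral_cayley_zpow_div (k : ℤ) :
    ∫ t : ℝ, cayley t ^ k / ((1 + t ^ 2 : ℝ) : ℂ) = if k = 0 then (Real.pi : ℂ) else 0 := by
  split_ifs with hk
  · subst hk
    simp_rw [zpow_zero, one_div, ← ofReal_inv]
    rw [integral_complex_ofReal, integral_univ_inv_one_add_sq]
  · have hend (l : Filter ℝ) (hl : Tendsto ((↑) : ℝ → ℂ) l (Bornology.cobounded ℂ)) :
        Tendsto (fun t => cayley t ^ k) l (𝓝 1) := by
      simpa using (tendsto_cayley hl).zpow₀ k (.inl one_ne_zero)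
    have h := integral_of_hasDerivAt_of_tendsto (hasDerivAt_cayley_zpow k)
      ((integrable_cayley_zpow_div k).const_mul _)
      (hend atBot (RCLike.tendsto_ofReal_atBot_cobounded ℂ))
      (hend atTop (RCLike.tendsto_ofReal_atTop_cobounded ℂ))
    rw [integral_const_mul, sub_self] at h
    exact (mul_eq_zero.mp h).resolve_left (by simp [hk, I_ne_zero])

noncomputable def hilbertEigenfunction (n : ℤ) (t : ℝ) : ℂ :=
  ((t : ℂ) - I) ^ n / ((t : ℂ) + I) ^ (n + 1)

theorem hilbertEigenfunction_eq_cayley_zpow_div (n : ℤ) (t : ℝ) :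
    hilbertEigenfunction n t = cayley t ^ n / ((t : ℂ) + I) := by
  rw [hilbertEigenfunction, cayley, div_zpow, zpow_add_one₀ (ofReal_add_I_ne_zero t), div_div]

theorem continuous_hilbertEigenfunction (n : ℤ) : Continuous (hilbertEigenfunction n) := by
  simp_rw [funext (hilbertEigenfunction_eq_cayley_zpow_div n)]
  exact (continuous_cayley.zpow₀ n fun t => .inl (cayley_ne_zero t)).div (by fun_prop)
    ofReal_add_I_ne_zero

theorem hilbertEigenfunction_mul_conj (n m : ℤ) (t : ℝ) :
    hilbertEigenfunction n t * starRingEnd ℂ (hilbertEigenfunction m t)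
      = cayley t ^ (n - m) / ((1 + t ^ 2 : ℝ) : ℂ) := by
  rw [hilbertEigenfunction_eq_cayley_zpow_div, hilbertEigenfunction_eq_cayley_zpow_div, map_div₀,
    map_zpow₀, conj_cayley, conj_ofReal_add_I, inv_zpow, zpow_sub₀ (cayley_ne_zero t),
    ← ofReal_sub_I_mul_ofReal_add_I, div_mul_div_comm, mul_comm ((t : ℂ) + I),
    div_eq_mul_inv (cayley t ^ n)]

theorem sq_norm_hilbertEigenfunction (n : ℤ) (t : ℝ) :
    ‖hilbertEigenfunction n t‖ ^ 2 = (1 + t ^ 2)⁻¹ := by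
  rw [← norm_cayley_zpow_div 0 t, ← sub_self n, ← hilbertEigenfunction_mul_conj, mul_conj',
    norm_pow, norm_real, Real.norm_of_nonneg (norm_nonneg _)]

theorem memLp_hilbertEigenfunction (n : ℤ) : MemLp (hilbertEigenfunction n) 2 volume := by
  rw [memLp_two_iff_integrable_sq_norm (continuous_hilbertEigenfunction n).aestronglyMeasurable]
  simpa only [sq_norm_hilbertEigenfunction] using integrable_inv_one_add_sq

theorem integral_hilbertEigenfunction_mul_conj (n m : ℤ) :
    ∫ t : ℝ, hilbertEigenfunction n t * starRingEnd ℂ (hilbertEigenfunction m t)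
      = if n = m then (Real.pi : ℂ) else 0 := by
  simp_rw [hilbertEigenfunction_mul_conj, integral_cayley_zpow_div, sub_eq_zero]

theorem MeasureTheory.MemLp.inner_toLp_toLp {α 𝕜 E : Type*} [MeasurableSpace α] {μ : Measure α}
    [RCLike 𝕜] [NormedAddCommGroup E] [InnerProductSpace 𝕜 E] {f g : α → E}
    (hf : MemLp f 2 μ) (hg : MemLp g 2 μ) :
    inner 𝕜 (hf.toLp f) (hg.toLp g) = ∫ x, inner 𝕜 (f x) (g x) ∂μ := by
  rw [L2.inner_def]
  refine integral_congr_ae ?_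
  filter_upwards [hf.coeFn_toLp, hg.coeFn_toLp] with x hfx hgx
  rw [hfx, hgx]

theorem orthonormal_inv_sqrt_smul {ι E : Type*} [NormedAddCommGroup E] [InnerProductSpace ℂ E]
    [DecidableEq ι] {v : ι → E} {r : ℝ} (hr : 0 < r)
    (hv : ∀ i j, inner ℂ (v i) (v j) = if i = j then (r : ℂ) else 0) :
    Orthonormal ℂ fun i => ((Real.sqrt r : ℂ))⁻¹ • v i := by
  rw [orthonormal_iff_ite]
  intro i j
  rw [inner_smul_left, inner_smul_right, hv, map_inv₀, conj_ofReal]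
  split_ifs
  · rw [← ofReal_inv, ← ofReal_mul, ← ofReal_mul, ← mul_assoc, ← mul_inv,
      Real.mul_self_sqrt hr.le, inv_mul_cancel₀ hr.ne', ofReal_one]
  · simp

theorem stmt_4 (a : ℤ → ℝ → ℂ)
    (ha : ∀ (n : ℤ) (t : ℝ),
      a n t = ((t : ℂ) - Complex.I) ^ n / ((t : ℂ) + Complex.I) ^ (n + 1)) :
    ∃ h : ∀ n : ℤ, MemLp (a n) 2 (volume : Measure ℝ),
      (∀ n m : ℤ,
        (∫ t : ℝ, a n t * (starRingEnd ℂ) (a m t))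
          = if n = m then (Real.pi : ℂ) else 0) ∧
      Orthonormal ℂ (fun n : ℤ =>
        ((Real.sqrt Real.pi : ℂ))⁻¹ • ((h n).toLp (a n))) := by
  obtain rfl : a = hilbertEigenfunction := funext₂ ha
  refine ⟨memLp_hilbertEigenfunction, integral_hilbertEigenfunction_mul_conj,
    orthonormal_inv_sqrt_smul Real.pi_pos fun n m => ?_⟩
  rw [MemLp.inner_toLp_toLp]
  simp_rw [RCLike.inner_apply, integral_hilbertEigenfunction_mul_conj, eq_comm]
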